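/- arXiv:0807.2815 — 5 statements merged into one kernel-verified Lean document; each statement's English description precedes it below -/
import Mathlib

section
/- Let (s_n)_{n≥1} be a sequence of positive integers bounded above by c, and define a_0 = 1, a_n = Σ_{k=1}^{n} s_k a_{n-k}. Let ψ be the unique solution in (1,∞) of Σ_{n≥1} s_n ψ^{-n} = 1. Then lim_{n→∞} a_n^{1/n} exists and equals ψ. -/
/-!
For `b n = a n ψ⁻ⁿ` the recurrence becomes the renewal equation
`b (n + 1) = ∑ k ≤ n, f k * b (n - k)` with weights `f k = s (k + 1) ψ^{-(k + 1)}` summing to `1`;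
hence `b n ≤ 1`, i.e. `a n ≤ ψⁿ`. Concatenating words shows `a m * a n ≤ a (m + n)`, so by
Fekete's lemma `a n ^ (1 / n)` tends to a limit `L` with `a n ≤ Lⁿ` for all `n`, and `L ≤ ψ`.
If `L < ψ`, then `∑ b n` would converge, and the Cauchy product of the renewal equation would give
`∑ b = b 0 + (∑ f) (∑ b) = 1 + ∑ b`.
-/

open Filter Topology Finset Real

theorem exists_tendsto_rpow_one_div_of_supermultiplicative {u : ℕ → ℝ} {C : ℝ}
    (hpos : ∀ n, 0 < u n) (hmul : ∀ m n, u m * u n ≤ u (m + n)) (hC : ∀ n, u n ≤ C ^ n) :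
    ∃ L > 0, Tendsto (fun n : ℕ => u n ^ ((1 : ℝ) / n)) atTop (𝓝 L) ∧ ∀ n, u n ≤ L ^ n := by
  have hsub : Subadditive fun n => -log (u n) := fun m n => by
    have := log_le_log (mul_pos (hpos m) (hpos n)) (hmul m n)
    rw [log_mul (hpos m).ne' (hpos n).ne'] at this
    linarith
  have hbdd : BddBelow (Set.range fun n : ℕ => -log (u n) / n) := by
    refine ⟨min 0 (-log C), ?_⟩
    rintro _ ⟨n, rfl⟩
    rcases Nat.eq_zero_or_pos n with rfl | hn
    · simp
    · have hlog : log (u n) ≤ n * log C := by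
        simpa [log_pow] using log_le_log (hpos n) (hC n)
      refine min_le_of_right_le ?_
      rw [le_div_iff₀ (by positivity)]
      linarith
  refine ⟨exp (-hsub.lim), exp_pos _, ?_, fun n => ?_⟩
  · refine ((continuous_exp.tendsto _).comp (hsub.tendsto_lim hbdd).neg).congr fun n => ?_
    rw [Function.comp_apply, rpow_def_of_pos (hpos n)]
    ring_nf
  · rcases Nat.eq_zero_or_pos n with rfl | hn
    · nlinarith [hmul 0 0, hpos 0]
    · have hlim := hsub.lim_le_div hbdd hn.ne'
      rw [le_div_iff₀ (by positivity)] at hlim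
      rw [← exp_nat_mul, ← exp_log (hpos n)]
      exact exp_le_exp.mpr (by linarith)

theorem le_of_tendsto_rpow_one_div {u : ℕ → ℝ} {C L : ℝ} (hu : ∀ n, 0 ≤ u n) (hC : 0 ≤ C)
    (huC : ∀ n, u n ≤ C ^ n) (hL : Tendsto (fun n : ℕ => u n ^ ((1 : ℝ) / n)) atTop (𝓝 L)) :
    L ≤ C := by
  refine le_of_tendsto hL (eventually_atTop.mpr ⟨1, fun n hn => ?_⟩)
  calc u n ^ ((1 : ℝ) / n) ≤ (C ^ n) ^ ((1 : ℝ) / n) := rpow_le_rpow (hu n) (huC n) (by positivity)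
    _ = C := by rw [one_div, pow_rpow_inv_natCast hC (by omega)]

section Renewal

variable {f b : ℕ → ℝ}

theorem le_one_of_renewal (hf : ∀ n, 0 ≤ f n) (hf1 : HasSum f 1)
    (hb0 : b 0 ≤ 1) (hb : ∀ n, b (n + 1) = ∑ k ∈ range (n + 1), f k * b (n - k)) (n : ℕ) :
    b n ≤ 1 := by
  induction n using Nat.strong_induction_on with
  | _ n ih =>
    cases n with
    | zero => exact hb0
    | succ n =>
      calc b (n + 1) = ∑ k ∈ range (n + 1), f k * b (n - k) := hb n
        _ ≤ ∑ k ∈ range (n + 1), f k :=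
          sum_le_sum fun k _ => mul_le_of_le_one_right (hf k) (ih _ (by omega))
        _ ≤ 1 := sum_le_hasSum _ (fun k _ => hf k) hf1

theorem not_summable_of_renewal (hf : ∀ n, 0 ≤ f n) (hf1 : HasSum f 1)
    (hb_nonneg : ∀ n, 0 ≤ b n) (hb0 : b 0 ≠ 0)
    (hb : ∀ n, b (n + 1) = ∑ k ∈ range (n + 1), f k * b (n - k)) : ¬ Summable b := by
  intro hbs
  have hcauchy := tsum_mul_tsum_eq_tsum_sum_range_of_summable_norm
    (hf1.summable.congr fun n => (norm_of_nonneg (hf n)).symm)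
    (hbs.congr fun n => (norm_of_nonneg (hb_nonneg n)).symm)
  rw [hf1.tsum_eq, one_mul, ← tsum_congr hb] at hcauchy
  have hsplit : ∑' n, b n = b 0 + ∑' n, b (n + 1) := hbs.tsum_eq_zero_add
  exact hb0 (by linarith)

end Renewal

section WordCount

variable {s a : ℕ → ℕ}

theorem mul_le_add_of_recurrence (ha0 : a 0 = 1)
    (ha : ∀ n, 1 ≤ n → a n = ∑ k ∈ Icc 1 n, s k * a (n - k)) (m n : ℕ) :
    a m * a n ≤ a (m + n) := by
  induction n using Nat.strong_induction_on with
  | _ n ih =>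
    rcases Nat.eq_zero_or_pos n with rfl | hn
    · simp [ha0]
    calc a m * a n = ∑ k ∈ Icc 1 n, s k * (a m * a (n - k)) := by
          rw [ha n hn, mul_sum]
          exact sum_congr rfl fun k _ => by ring
      _ ≤ ∑ k ∈ Icc 1 n, s k * a (m + n - k) := by
          refine sum_le_sum fun k hk => Nat.mul_le_mul_left _ ?_
          have hk := mem_Icc.mp hk
          simpa [show m + (n - k) = m + n - k by omega] using ih (n - k) (by omega)
      _ ≤ ∑ k ∈ Icc 1 (m + n), s k * a (m + n - k) :=
          sum_le_sum_of_subset (Icc_subset_Icc_right (by omega))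
      _ = a (m + n) := (ha _ (by omega)).symm

theorem pos_of_recurrence (ha0 : a 0 = 1)
    (ha : ∀ n, 1 ≤ n → a n = ∑ k ∈ Icc 1 n, s k * a (n - k)) (hs1 : 0 < s 1) (n : ℕ) :
    0 < a n := by
  induction n with
  | zero => simp [ha0]
  | succ n ih =>
    have ha1 : a 1 = s 1 := by simp [ha 1 le_rfl, ha0]
    exact (mul_pos ih (ha1 ▸ hs1)).trans_le (mul_le_add_of_recurrence ha0 ha n 1)

theorem weighted_recurrence (ha : ∀ n, 1 ≤ n → a n = ∑ k ∈ Icc 1 n, s k * a (n - k))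
    (x : ℝ) (n : ℕ) :
    (a (n + 1) : ℝ) * x ^ (n + 1) =
      ∑ k ∈ range (n + 1), (s (k + 1) * x ^ (k + 1)) * (a (n - k) * x ^ (n - k)) := by
  rw [ha (n + 1) (by omega), ← Ico_add_one_right_eq_Icc, sum_Ico_eq_sum_range]
  push_cast
  rw [sum_mul]
  refine sum_congr (by simp) fun k hk => ?_
  have hk := mem_range.mp hk
  rw [show n + 1 - (1 + k) = n - k by omega, add_comm 1 k,
    show n + 1 = (k + 1) + (n - k) by omega, pow_add]
  ring

theorem cast_le_pow_of_recurrence (ha0 : a 0 = 1)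
    (ha : ∀ n, 1 ≤ n → a n = ∑ k ∈ Icc 1 n, s k * a (n - k)) {ψ : ℝ} (hψ : 0 < ψ)
    (hf1 : HasSum (fun n => (s (n + 1) : ℝ) * ψ⁻¹ ^ (n + 1)) 1) (n : ℕ) :
    (a n : ℝ) ≤ ψ ^ n := by
  have hb := le_one_of_renewal (fun n => by positivity) hf1 (b := fun n => a n * ψ⁻¹ ^ n)
    (by simp [ha0]) (weighted_recurrence ha ψ⁻¹) n
  rwa [inv_pow, mul_inv_le_iff₀ (by positivity), one_mul] at hb

theorem le_of_forall_cast_le_pow_of_recurrence (ha0 : a 0 = 1)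
    (ha : ∀ n, 1 ≤ n → a n = ∑ k ∈ Icc 1 n, s k * a (n - k)) {ψ L : ℝ} (hψ : 0 < ψ)
    (hf1 : HasSum (fun n => (s (n + 1) : ℝ) * ψ⁻¹ ^ (n + 1)) 1) (hL : 0 ≤ L)
    (haL : ∀ n, (a n : ℝ) ≤ L ^ n) : ψ ≤ L := by
  by_contra! hlt
  refine not_summable_of_renewal (fun n => by positivity) hf1 (b := fun n => a n * ψ⁻¹ ^ n)
    (fun n => by positivity) (by simp [ha0]) (weighted_recurrence ha ψ⁻¹) ?_
  refine (summable_geometric_of_lt_one (r := L * ψ⁻¹) (by positivity) ?_).of_nonneg_of_le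
    (fun n => by positivity) fun n => ?_
  · rwa [mul_inv_lt_iff₀ hψ, one_mul]
  · rw [mul_pow]
    exact mul_le_mul_of_nonneg_right (haL n) (by positivity)

end WordCount

theorem stmt_5 (c : ℕ) (s : ℕ → ℕ)
    (hs : ∀ n, 1 ≤ n → 1 ≤ s n ∧ s n ≤ c)
    (a : ℕ → ℕ) (ha0 : a 0 = 1)
    (ha : ∀ n, 1 ≤ n → a n = ∑ k ∈ Finset.Icc 1 n, s k * a (n - k))
    (ψ : ℝ) (hψ1 : 1 < ψ)
    (hψ : ∑' n : ℕ, (s (n + 1) : ℝ) * ψ⁻¹ ^ (n + 1) = 1) :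
    Tendsto (fun n : ℕ => (a n : ℝ) ^ ((1 : ℝ) / n)) atTop (𝓝 ψ) := by
  have hψ0 : 0 < ψ := one_pos.trans hψ1
  have hf1 : HasSum (fun n => (s (n + 1) : ℝ) * ψ⁻¹ ^ (n + 1)) 1 := by
    refine hψ ▸ Summable.hasSum ?_
    by_contra h
    exact zero_ne_one (tsum_eq_zero_of_not_summable h ▸ hψ)
  have ha_le := cast_le_pow_of_recurrence ha0 ha hψ0 hf1
  obtain ⟨L, hL0, hL, ha_L⟩ := exists_tendsto_rpow_one_div_of_supermultiplicative
    (fun n => by exact_mod_cast pos_of_recurrence ha0 ha (hs 1 le_rfl).1 n)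
    (fun m n => by exact_mod_cast mul_le_add_of_recurrence ha0 ha m n) ha_le
  have hLψ : L ≤ ψ := le_of_tendsto_rpow_one_div (fun n => by positivity) hψ0.le ha_le hL
  have hψL : ψ ≤ L := le_of_forall_cast_le_pow_of_recurrence ha0 ha hψ0 hf1 hL0.le ha_L
  rwa [le_antisymm hLψ hψL] at hL
end

section
/- Let (r_n) ⪯ (t_n) be sequences of positive integers bounded above by c such that t_n = r_n for all n < k and t_n − r_n ≥ b − 1 for all n ≥ k, for some integer k and real b. Let ρ and τ be the growth rates (unique positive solutions of Σ r_n x^{-n} = 1 and Σ t_n x^{-n} = 1). Then for every real γ with ρ ≤ γ ≤ min{b, τ}, there exists a sequence (s_n) of positive integers with r_n ≤ s_n ≤ t_n for all n whose growth rate equals γ. -/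
/-!
Put q = γ⁻¹. Power series with nonnegative coefficients are monotone in q, so
ρ ≤ γ ≤ τ gives R = ∑ rₙ qⁿ ≤ 1 ≤ ∑ tₙ qⁿ, and it remains to write the deficit 1 - R as
∑ aₙ qⁿ with digits 0 ≤ aₙ ≤ tₙ - rₙ. Choose the digits greedily. The remainder stays between
0 and the remaining capacity: when the digit at n is not capped the remainder drops below qⁿ,
and since there was room at n we have n ≥ k, so the capacity beyond n is at least
∑_{m>n} (γ - 1) qᵐ = qⁿ. The remainders are thus squeezed to 0 by the tails of a convergent series.
-/

open Filter Topology Finset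

theorem tsum_nat_add_eq_add_tsum_nat_add_succ {f : ℕ → ℝ} (hf : Summable f) (n : ℕ) :
    ∑' m, f (m + n) = f n + ∑' m, f (m + (n + 1)) := by
  rw [((summable_nat_add_iff n).mpr hf).tsum_eq_zero_add]
  simp only [zero_add, add_right_comm _ 1 n, add_assoc]

noncomputable def greedyRemainder (w : ℕ → ℝ) (cap : ℕ → ℕ) (x : ℝ) : ℕ → ℝ
  | 0 => x
  | n + 1 =>
    greedyRemainder w cap x n - min ⌊greedyRemainder w cap x n / w n⌋₊ (cap n) * w n

noncomputable def greedyDigit (w : ℕ → ℝ) (cap : ℕ → ℕ) (x : ℝ) (n : ℕ) : ℕ :=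
  min ⌊greedyRemainder w cap x n / w n⌋₊ (cap n)

section Greedy

variable {w : ℕ → ℝ} {cap : ℕ → ℕ} {x : ℝ}

theorem greedyRemainder_succ (n : ℕ) :
    greedyRemainder w cap x (n + 1) =
      greedyRemainder w cap x n - greedyDigit w cap x n * w n := rfl

theorem greedyDigit_le (n : ℕ) : greedyDigit w cap x n ≤ cap n := min_le_right _ _

theorem greedyRemainder_eq_sub_sum (n : ℕ) :
    greedyRemainder w cap x n = x - ∑ m ∈ range n, (greedyDigit w cap x m : ℝ) * w m := by
  induction n with
  | zero => simp [greedyRemainder]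
  | succ n ih => rw [greedyRemainder_succ, ih, sum_range_succ]; ring

theorem greedyRemainder_succ_nonneg (hw : 0 < w n) (h : 0 ≤ greedyRemainder w cap x n) :
    0 ≤ greedyRemainder w cap x (n + 1) := by
  have hdigit : (greedyDigit w cap x n : ℝ) ≤ greedyRemainder w cap x n / w n :=
    (Nat.cast_le.mpr (min_le_left _ _)).trans (Nat.floor_le (div_nonneg h hw.le))
  rw [greedyRemainder_succ, sub_nonneg]
  exact (le_div_iff₀ hw).mp hdigit

theorem greedyRemainder_succ_lt (hw : 0 < w n) (h : greedyDigit w cap x n < cap n) :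
    greedyRemainder w cap x (n + 1) < w n := by
  have hfloor : greedyDigit w cap x n = ⌊greedyRemainder w cap x n / w n⌋₊ :=
    min_eq_left (min_lt_iff.mp h |>.resolve_right (lt_irrefl _)).le
  have := Nat.lt_floor_add_one (greedyRemainder w cap x n / w n)
  rw [← hfloor, div_lt_iff₀ hw] at this
  rw [greedyRemainder_succ]
  linarith

/-- `hcover` is a Kakeya-type condition: wherever a digit may be nonzero, the capacity beyond it
covers one unit of its weight. -/
theorem greedyRemainder_mem_Icc (hw : ∀ n, 0 < w n)
    (hs : Summable fun n => (cap n : ℝ) * w n)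
    (hcover : ∀ n, cap n ≠ 0 → w n ≤ ∑' m, (cap (m + (n + 1)) : ℝ) * w (m + (n + 1)))
    (hx : x ∈ Set.Icc 0 (∑' n, (cap n : ℝ) * w n)) (n : ℕ) :
    greedyRemainder w cap x n ∈ Set.Icc 0 (∑' m, (cap (m + n) : ℝ) * w (m + n)) := by
  induction n with
  | zero => simpa [greedyRemainder] using hx
  | succ n ih =>
    refine ⟨greedyRemainder_succ_nonneg (hw n) ih.1, ?_⟩
    rcases (greedyDigit_le (w := w) (x := x) n).lt_or_eq with hlt | heq
    · exact (greedyRemainder_succ_lt (hw n) hlt).le.trans (hcover n (by omega))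
    · have := tsum_nat_add_eq_add_tsum_nat_add_succ hs n
      rw [greedyRemainder_succ, heq]
      linarith [ih.2]

theorem hasSum_greedyDigit (hw : ∀ n, 0 < w n)
    (hs : Summable fun n => (cap n : ℝ) * w n)
    (hcover : ∀ n, cap n ≠ 0 → w n ≤ ∑' m, (cap (m + (n + 1)) : ℝ) * w (m + (n + 1)))
    (hx : x ∈ Set.Icc 0 (∑' n, (cap n : ℝ) * w n)) :
    HasSum (fun n => (greedyDigit w cap x n : ℝ) * w n) x := by
  have hmem := greedyRemainder_mem_Icc hw hs hcover hx
  have hrem : Tendsto (greedyRemainder w cap x) atTop (𝓝 0) :=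
    squeeze_zero (fun n => (hmem n).1) (fun n => (hmem n).2)
      (tendsto_sum_nat_add fun n => (cap n : ℝ) * w n)
  rw [hasSum_iff_tendsto_nat_of_nonneg (fun n => by have := hw n; positivity)]
  simpa [greedyRemainder_eq_sub_sum] using hrem.const_sub x

end Greedy

theorem summable_natCast_mul_pow_succ {c : ℕ} {f : ℕ → ℕ} (hf : ∀ n, 1 ≤ n → f n ≤ c)
    {x : ℝ} (hx0 : 0 ≤ x) (hx1 : x < 1) :
    Summable fun n => (f (n + 1) : ℝ) * x ^ (n + 1) := by
  refine .of_nonneg_of_le (fun n => by positivity) (fun n => ?_)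
    ((summable_geometric_of_lt_one hx0 hx1).mul_left (c * x))
  calc (f (n + 1) : ℝ) * x ^ (n + 1) ≤ c * x ^ (n + 1) := by
        gcongr; exact_mod_cast hf (n + 1) n.succ_pos
    _ = c * x * x ^ n := by ring

theorem tsum_natCast_mul_pow_succ_mono {c : ℕ} {f : ℕ → ℕ} (hf : ∀ n, 1 ≤ n → f n ≤ c)
    {x y : ℝ} (hx : 0 ≤ x) (hxy : x ≤ y) (hy : y < 1) :
    ∑' n, (f (n + 1) : ℝ) * x ^ (n + 1) ≤ ∑' n, (f (n + 1) : ℝ) * y ^ (n + 1) :=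
  Summable.tsum_le_tsum (fun n => by gcongr)
    (summable_natCast_mul_pow_succ hf hx (hxy.trans_lt hy))
    (summable_natCast_mul_pow_succ hf (hx.trans hxy) hy)

theorem hasSum_sub_one_mul_inv_pow {γ : ℝ} (hγ : 1 < γ) (n : ℕ) :
    HasSum (fun m : ℕ => (γ - 1) * γ⁻¹ ^ (m + n + 1)) (γ⁻¹ ^ n) := by
  have hγ0 : γ ≠ 0 := by positivity
  have hγ1 : γ - 1 ≠ 0 := sub_ne_zero.mpr hγ.ne'
  have hgeom := (hasSum_geometric_of_lt_one (inv_nonneg.mpr (by positivity))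
    (inv_lt_one_of_one_lt₀ hγ)).mul_left ((γ - 1) * γ⁻¹ ^ (n + 1))
  have hval : (γ - 1) * γ⁻¹ ^ (n + 1) * (1 - γ⁻¹)⁻¹ = γ⁻¹ ^ n := by
    rw [pow_succ]
    field_simp
  have hterm : (fun m : ℕ => (γ - 1) * γ⁻¹ ^ (m + n + 1)) =
      fun m => (γ - 1) * γ⁻¹ ^ (n + 1) * γ⁻¹ ^ m := by
    funext m; ring
  rwa [hterm, ← hval]

theorem inv_pow_le_tsum_of_sub_one_le {γ : ℝ} (hγ : 1 < γ) {a : ℕ → ℝ}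
    (ha : Summable fun n => a n * γ⁻¹ ^ (n + 1)) (n : ℕ)
    (h : ∀ m, γ - 1 ≤ a (m + (n + 1))) :
    γ⁻¹ ^ (n + 1) ≤ ∑' m, a (m + (n + 1)) * γ⁻¹ ^ (m + (n + 1) + 1) :=
  hasSum_le (fun m => by gcongr; exact h m) (hasSum_sub_one_mul_inv_pow hγ (n + 1))
    ((summable_nat_add_iff (n + 1)).mpr ha).hasSum

theorem exists_between_hasSum_inv_pow {c k : ℕ} {r t : ℕ → ℕ} {γ : ℝ}
    (ht : ∀ n, 1 ≤ n → t n ≤ c) (hrt : ∀ n, 1 ≤ n → r n ≤ t n)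
    (heq : ∀ n, 1 ≤ n → n < k → t n = r n)
    (hgap : ∀ n, k ≤ n → γ - 1 ≤ (t n : ℝ) - (r n : ℝ)) (hγ : 1 < γ)
    (hR : ∑' n, (r (n + 1) : ℝ) * γ⁻¹ ^ (n + 1) ≤ 1)
    (hT : 1 ≤ ∑' n, (t (n + 1) : ℝ) * γ⁻¹ ^ (n + 1)) :
    ∃ s : ℕ → ℕ, (∀ n, 1 ≤ n → r n ≤ s n ∧ s n ≤ t n) ∧
      HasSum (fun n => (s (n + 1) : ℝ) * γ⁻¹ ^ (n + 1)) 1 := by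
  have hq0 : 0 ≤ γ⁻¹ := inv_nonneg.mpr (by positivity)
  have hq1 : γ⁻¹ < 1 := inv_lt_one_of_one_lt₀ hγ
  have hr : HasSum (fun n => (r (n + 1) : ℝ) * γ⁻¹ ^ (n + 1)) _ :=
    (summable_natCast_mul_pow_succ (fun n hn => (hrt n hn).trans (ht n hn)) hq0 hq1).hasSum
  set R := ∑' n, (r (n + 1) : ℝ) * γ⁻¹ ^ (n + 1)
  set cap := fun n => t (n + 1) - r (n + 1)
  have hcap (n : ℕ) : (cap n : ℝ) = t (n + 1) - r (n + 1) := Nat.cast_sub (hrt _ n.succ_pos)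
  have hcap_hasSum : HasSum (fun n => (cap n : ℝ) * γ⁻¹ ^ (n + 1))
      (∑' n, (t (n + 1) : ℝ) * γ⁻¹ ^ (n + 1) - R) := by
    simpa only [hcap, sub_mul] using (summable_natCast_mul_pow_succ ht hq0 hq1).hasSum.sub hr
  have hcover (n : ℕ) (hn : cap n ≠ 0) :
      γ⁻¹ ^ (n + 1) ≤ ∑' m, (cap (m + (n + 1)) : ℝ) * γ⁻¹ ^ (m + (n + 1) + 1) := by
    have hkn : k ≤ n + 1 := by
      by_contra! hlt
      exact hn (by simp [cap, heq (n + 1) n.succ_pos hlt])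
    refine inv_pow_le_tsum_of_sub_one_le hγ hcap_hasSum.summable n fun m => ?_
    rw [hcap]
    exact hgap _ (by omega)
  set a := greedyDigit (fun n => γ⁻¹ ^ (n + 1)) cap (1 - R)
  have ha : HasSum (fun n => (a n : ℝ) * γ⁻¹ ^ (n + 1)) (1 - R) :=
    hasSum_greedyDigit (fun n => by positivity) hcap_hasSum.summable hcover
      (by rw [hcap_hasSum.tsum_eq]; constructor <;> linarith)
  refine ⟨fun n => r n + a (n - 1), fun n hn => ?_, ?_⟩
  · obtain ⟨m, rfl⟩ := Nat.exists_eq_add_of_le' hn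
    have : a m ≤ t (m + 1) - r (m + 1) := greedyDigit_le m
    have := hrt (m + 1) m.succ_pos
    simp only [Nat.add_sub_cancel]
    omega
  · simpa only [Nat.add_sub_cancel, Nat.cast_add, add_mul, add_sub_cancel] using hr.add ha

theorem stmt_9_general (c : ℕ) (r t : ℕ → ℕ)
    (ht : ∀ n, 1 ≤ n → 1 ≤ t n ∧ t n ≤ c)
    (hrt : ∀ n, 1 ≤ n → r n ≤ t n)
    (k : ℕ) (b : ℝ)
    (heq : ∀ n, 1 ≤ n → n < k → t n = r n)
    (hgap : ∀ n, k ≤ n → b - 1 ≤ (t n : ℝ) - (r n : ℝ))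
    (ρ τ : ℝ) (hρ1 : 1 < ρ) (hτ1 : 1 < τ)
    (hρ : ∑' n : ℕ, (r (n + 1) : ℝ) * ρ⁻¹ ^ (n + 1) = 1)
    (hτ : ∑' n : ℕ, (t (n + 1) : ℝ) * τ⁻¹ ^ (n + 1) = 1) :
    ∀ γ : ℝ, ρ ≤ γ → γ ≤ min b τ →
      ∃ s : ℕ → ℕ, (∀ n, 1 ≤ n → r n ≤ s n ∧ s n ≤ t n) ∧
        ∑' n : ℕ, (s (n + 1) : ℝ) * γ⁻¹ ^ (n + 1) = 1 := by
  intro γ hργ hγ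
  have hγ1 : 1 < γ := hρ1.trans_le hργ
  have ht' : ∀ n, 1 ≤ n → t n ≤ c := fun n hn => (ht n hn).2
  have hR : ∑' n, (r (n + 1) : ℝ) * γ⁻¹ ^ (n + 1) ≤ 1 :=
    hρ ▸ tsum_natCast_mul_pow_succ_mono (fun n hn => (hrt n hn).trans (ht' n hn))
      (inv_nonneg.mpr (by positivity)) (inv_anti₀ (by positivity) hργ)
      (inv_lt_one_of_one_lt₀ hρ1)
  have hT : 1 ≤ ∑' n, (t (n + 1) : ℝ) * γ⁻¹ ^ (n + 1) :=
    hτ ▸ tsum_natCast_mul_pow_succ_mono ht' (inv_nonneg.mpr (by positivity))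
      (inv_anti₀ (by positivity) (hγ.trans (min_le_right _ _))) (inv_lt_one_of_one_lt₀ hγ1)
  obtain ⟨s, hrst, hs⟩ := exists_between_hasSum_inv_pow ht' hrt heq
    (fun n hn => by linarith [hgap n hn, hγ.trans (min_le_left _ _)]) hγ1 hR hT
  exact ⟨s, hrst, hs.tsum_eq⟩

theorem stmt_9 (c : ℕ) (r t : ℕ → ℕ)
    (hr : ∀ n, 1 ≤ n → 1 ≤ r n ∧ r n ≤ c)
    (ht : ∀ n, 1 ≤ n → 1 ≤ t n ∧ t n ≤ c)
    (hrt : ∀ n, 1 ≤ n → r n ≤ t n)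
    (k : ℕ) (b : ℝ)
    (heq : ∀ n, 1 ≤ n → n < k → t n = r n)
    (hgap : ∀ n, k ≤ n → b - 1 ≤ (t n : ℝ) - (r n : ℝ))
    (ρ τ : ℝ) (hρ1 : 1 < ρ) (hτ1 : 1 < τ)
    (hρ : ∑' n : ℕ, (r (n + 1) : ℝ) * ρ⁻¹ ^ (n + 1) = 1)
    (hτ : ∑' n : ℕ, (t (n + 1) : ℝ) * τ⁻¹ ^ (n + 1) = 1) :
    ∀ γ : ℝ, ρ ≤ γ → γ ≤ min b τ →
      ∃ s : ℕ → ℕ, (∀ n, 1 ≤ n → r n ≤ s n ∧ s n ≤ t n) ∧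
        ∑' n : ℕ, (s (n + 1) : ℝ) * γ⁻¹ ^ (n + 1) = 1 :=
  stmt_9_general c r t ht hrt k b heq hgap ρ τ hρ1 hτ1 hρ hτ
end

section
/- Let (r_n) ⪯ (t_n) be sequences of positive integers bounded above by c with r_n ≠ t_n for infinitely many n. Then the set S of growth rates of sequences (s_n) with r_n ≤ s_n ≤ t_n for all n (growth rate meaning the unique positive solution of Σ s_n x^{-n} = 1) is a perfect set: S is closed and every point of S is an accumulation point of S. -/
/-!
Write `F_d(x) = ∑ d n x^{-(n+1)}`. For digits in `[1, c]` the root of `F_d = 1` lies in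
`[2, c + 1]`, and `(d, x) ↦ F_d(x)` is continuous on (box of digit sequences) × `[2, ∞)` by
uniform convergence. The set of growth rates is therefore the projection of a compact set, hence
closed. Since `F_d(x) - F_d(y) ≥ d 0 (x⁻¹ - y⁻¹)` for `x ≤ y`, sequences agreeing on their first
`N` digits have growth rates `O(2^{-N})` apart; changing one free digit far out gives such a
sequence, and its growth rate differs because `F_d(x)` itself changes.
-/

open Set Function

/-- `d n` plays the role of the paper's `s_{n+1}`. -/
noncomputable def digitSeries (d : ℕ → ℕ) (x : ℝ) : ℝ := ∑' n, (d n : ℝ) * x⁻¹ ^ (n + 1)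

def growthRates (B : Set (ℕ → ℕ)) : Set ℝ := {x | ∃ d ∈ B, 1 < x ∧ digitSeries d x = 1}

lemma hasSum_inv_pow_succ {x : ℝ} (hx : 1 < x) :
    HasSum (fun n : ℕ => x⁻¹ ^ (n + 1)) (x - 1)⁻¹ := by
  have hx0 : x ≠ 0 := by positivity
  have hx1 : x - 1 ≠ 0 := by linarith
  have hsum : (1 - x⁻¹)⁻¹ * x⁻¹ = (x - 1)⁻¹ := by field_simp
  simpa only [← pow_succ, hsum] using
    (hasSum_geometric_of_lt_one (inv_nonneg.2 (by linarith))
      (inv_lt_one_of_one_lt₀ hx)).mul_right x⁻¹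

section digitSeries

variable {c : ℕ} {d d' : ℕ → ℕ} {x y : ℝ}

lemma summable_digitSeries (hdc : ∀ n, d n ≤ c) (hx : 1 < x) :
    Summable fun n => (d n : ℝ) * x⁻¹ ^ (n + 1) := by
  have hx0 : 0 ≤ x⁻¹ := inv_nonneg.2 (by linarith)
  refine .of_nonneg_of_le (fun n => by positivity) (fun n => ?_)
    ((hasSum_inv_pow_succ hx).summable.mul_left (c : ℝ))
  exact mul_le_mul_of_nonneg_right (by exact_mod_cast hdc n) (by positivity)

lemma inv_sub_one_le_digitSeries (hd1 : ∀ n, 1 ≤ d n) (hdc : ∀ n, d n ≤ c) (hx : 1 < x) :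
    (x - 1)⁻¹ ≤ digitSeries d x := by
  have hx0 : 0 ≤ x⁻¹ := inv_nonneg.2 (by linarith)
  refine hasSum_le (fun n => ?_) (hasSum_inv_pow_succ hx) (summable_digitSeries hdc hx).hasSum
  exact le_mul_of_one_le_left (by positivity) (by exact_mod_cast hd1 n)

lemma digitSeries_le_mul_inv_sub_one (hdc : ∀ n, d n ≤ c) (hx : 1 < x) :
    digitSeries d x ≤ c * (x - 1)⁻¹ := by
  have hx0 : 0 ≤ x⁻¹ := inv_nonneg.2 (by linarith)
  refine hasSum_le (fun n => ?_) (summable_digitSeries hdc hx).hasSum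
    ((hasSum_inv_pow_succ hx).mul_left (c : ℝ))
  exact mul_le_mul_of_nonneg_right (by exact_mod_cast hdc n) (by positivity)

lemma mem_Icc_of_digitSeries_eq_one (hd1 : ∀ n, 1 ≤ d n) (hdc : ∀ n, d n ≤ c) (hx : 1 < x)
    (h : digitSeries d x = 1) : x ∈ Icc 2 ((c : ℝ) + 1) := by
  have hx1 : 0 < x - 1 := by linarith
  constructor
  · have := inv_sub_one_le_digitSeries hd1 hdc hx
    rw [h, inv_le_one₀ hx1] at this
    linarith
  · have := digitSeries_le_mul_inv_sub_one hdc hx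
    rw [h, le_mul_inv_iff₀ hx1] at this
    linarith

lemma continuousOn_digitSeries :
    ContinuousOn (fun p : (ℕ → ℕ) × ℝ => digitSeries p.1 p.2)
      ((univ.pi fun _ => Iic c) ×ˢ Ici 2) := by
  refine continuousOn_tsum (u := fun n => (c : ℝ) * 2⁻¹ ^ (n + 1)) (fun n => ?_)
    ((hasSum_inv_pow_succ one_lt_two).summable.mul_left (c : ℝ)) ?_
  · have hd : Continuous fun p : (ℕ → ℕ) × ℝ => (p.1 n : ℝ) :=
      continuous_of_discreteTopology.comp ((continuous_apply n).comp continuous_fst)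
    refine hd.continuousOn.mul ((continuousOn_snd.inv₀ fun p hp => ?_).pow _)
    have : (2 : ℝ) ≤ p.2 := hp.2
    positivity
  · rintro n ⟨d, x⟩ ⟨hd, hx⟩
    have hx : (2 : ℝ) ≤ x := hx
    have hx0 : 0 ≤ x⁻¹ := inv_nonneg.2 (by linarith)
    rw [norm_mul, norm_pow, Real.norm_natCast, Real.norm_of_nonneg hx0]
    gcongr
    exact_mod_cast hd n (mem_univ n)

lemma exists_digitSeries_eq_one (hd1 : ∀ n, 1 ≤ d n) (hdc : ∀ n, d n ≤ c) :
    ∃ x ∈ Icc 2 ((c : ℝ) + 1), digitSeries d x = 1 := by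
  have hc : (1 : ℝ) ≤ c := by exact_mod_cast (hd1 0).trans (hdc 0)
  have hcont : ContinuousOn (digitSeries d) (Icc 2 ((c : ℝ) + 1)) :=
    continuousOn_digitSeries.comp (continuous_const.prodMk continuous_id).continuousOn
      fun x hx => ⟨fun n _ => hdc n, hx.1⟩
  refine intermediate_value_Icc' (by linarith) hcont ⟨?_, ?_⟩
  · simpa [mul_inv_cancel₀ (by positivity : (c : ℝ) ≠ 0)] using
      digitSeries_le_mul_inv_sub_one hdc (by linarith : 1 < (c : ℝ) + 1)
  · simpa [show (2 : ℝ) - 1 = 1 by norm_num] using inv_sub_one_le_digitSeries hd1 hdc one_lt_two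


lemma inv_sub_inv_le_digitSeries_sub (hd0 : 1 ≤ d 0) (hdc : ∀ n, d n ≤ c) (hx : 1 < x)
    (hxy : x ≤ y) : x⁻¹ - y⁻¹ ≤ digitSeries d x - digitSeries d y := by
  have hy : 1 < y := hx.trans_le hxy
  have hinv : y⁻¹ ≤ x⁻¹ := inv_anti₀ (by linarith) hxy
  have hy0 : 0 ≤ y⁻¹ := inv_nonneg.2 (by linarith)
  have h := (summable_digitSeries hdc hx).hasSum.sub (summable_digitSeries hdc hy).hasSum
  have h0 := le_hasSum h 0 fun n _ => by
    rw [← mul_sub]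
    exact mul_nonneg (Nat.cast_nonneg _) (sub_nonneg.2 (pow_le_pow_left₀ hy0 hinv _))
  have hd0' : (1 : ℝ) ≤ d 0 := by exact_mod_cast hd0
  simp only [zero_add, pow_one, ← mul_sub] at h0
  unfold digitSeries
  nlinarith [sub_nonneg.2 hinv]

lemma abs_sub_le_mul_abs_digitSeries_sub (hd0 : 1 ≤ d 0) (hdc : ∀ n, d n ≤ c) (hx : 1 < x)
    (hy : 1 < y) : |x - y| ≤ x * y * |digitSeries d x - digitSeries d y| := by
  wlog hxy : x ≤ y generalizing x y
  · rw [abs_sub_comm, mul_comm x, abs_sub_comm (digitSeries d x)]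
    exact this hy hx (le_of_not_ge hxy)
  have hxy0 : 0 < x * y := by nlinarith
  calc |x - y| = x * y * (x⁻¹ - y⁻¹) := by
        rw [abs_sub_comm, abs_of_nonneg (by linarith)]
        field_simp
    _ ≤ x * y * |digitSeries d x - digitSeries d y| := by
        gcongr
        exact (inv_sub_inv_le_digitSeries_sub hd0 hdc hx hxy).trans (le_abs_self _)

lemma abs_digitSeries_sub_le {N : ℕ} (hdc : ∀ n, d n ≤ c) (hd'c : ∀ n, d' n ≤ c)
    (hdd' : ∀ n < N, d n = d' n) (hx : 2 ≤ x) :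
    |digitSeries d x - digitSeries d' x| ≤ c * 2⁻¹ ^ N := by
  have hx1 : 1 < x := by linarith
  have hx0 : 0 ≤ x⁻¹ := inv_nonneg.2 (by linarith)
  have hx2 : x⁻¹ ≤ 2⁻¹ := inv_anti₀ two_pos hx
  have h := (summable_digitSeries hdc hx1).hasSum.sub (summable_digitSeries hd'c hx1).hasSum
  have hprefix : ∑ n ∈ Finset.range N, ((d n : ℝ) * x⁻¹ ^ (n + 1) - d' n * x⁻¹ ^ (n + 1)) = 0 :=
    Finset.sum_eq_zero fun n hn => by rw [hdd' n (Finset.mem_range.1 hn), sub_self]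
  rw [← hasSum_nat_add_iff' N, hprefix, sub_zero] at h
  have hbound := (hasSum_inv_pow_succ one_lt_two).mul_left ((c : ℝ) * 2⁻¹ ^ N)
  rw [show (2 - 1 : ℝ)⁻¹ = 1 by norm_num, mul_one] at hbound
  refine h.norm_le_of_bounded hbound fun n => ?_
  rw [← sub_mul, norm_mul, norm_pow, Real.norm_of_nonneg hx0, mul_assoc, ← pow_add,
    show N + (n + 1) = n + N + 1 by ring]
  gcongr
  exact abs_sub_le_of_nonneg_of_le (Nat.cast_nonneg _) (by exact_mod_cast hdc _)
    (Nat.cast_nonneg _) (by exact_mod_cast hd'c _)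

lemma digitSeries_update_ne {k v : ℕ} (hdc : ∀ n, d n ≤ c) (hx : 1 < x) (hv : v ≠ d k) :
    digitSeries (update d k v) x ≠ digitSeries d x := by
  have h := (summable_digitSeries hdc hx).hasSum.update k (v * x⁻¹ ^ (k + 1))
  have hfun : update (fun n => (d n : ℝ) * x⁻¹ ^ (n + 1)) k (v * x⁻¹ ^ (k + 1)) =
      fun n => (update d k v n : ℝ) * x⁻¹ ^ (n + 1) := by
    funext n
    rcases eq_or_ne n k with rfl | hn <;> simp [update_of_ne, *]
  rw [hfun, ← sub_mul] at h
  rw [digitSeries, h.tsum_eq, digitSeries, Ne, add_eq_right]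
  have hx0 : x⁻¹ ≠ 0 := by positivity
  exact mul_ne_zero (sub_ne_zero.2 (by exact_mod_cast hv)) (pow_ne_zero _ hx0)

lemma abs_sub_le_of_digitSeries_eq_one {N : ℕ} (hd1 : ∀ n, 1 ≤ d n) (hdc : ∀ n, d n ≤ c)
    (hd'1 : ∀ n, 1 ≤ d' n) (hd'c : ∀ n, d' n ≤ c) (hdd' : ∀ n < N, d n = d' n)
    (hx : 1 < x) (hy : 1 < y) (hdx : digitSeries d x = 1) (hd'y : digitSeries d' y = 1) :
    |x - y| ≤ (c + 1) ^ 2 * (c * 2⁻¹ ^ N) := by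
  obtain ⟨hx2, hxc⟩ := mem_Icc_of_digitSeries_eq_one hd1 hdc hx hdx
  obtain ⟨hy2, hyc⟩ := mem_Icc_of_digitSeries_eq_one hd'1 hd'c hy hd'y
  calc |x - y| ≤ x * y * |digitSeries d x - digitSeries d y| :=
        abs_sub_le_mul_abs_digitSeries_sub (hd1 0) hdc hx hy
    _ = x * y * |digitSeries d y - digitSeries d' y| := by
        rw [hdx, ← hd'y, abs_sub_comm]
    _ ≤ (c + 1) ^ 2 * (c * 2⁻¹ ^ N) := by
        rw [sq]
        gcongr
        exact abs_digitSeries_sub_le hdc hd'c hdd' hy2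

end digitSeries

lemma isClosed_growthRates {c : ℕ} {B : Set (ℕ → ℕ)} (hB : IsClosed B)
    (hBc : B ⊆ univ.pi fun _ => Icc 1 c) : IsClosed (growthRates B) := by
  have hbox : IsCompact (B ×ˢ Icc 2 ((c : ℝ) + 1)) :=
    ((isCompact_univ_pi fun _ => (finite_Icc 1 c).isCompact).of_isClosed_subset hB hBc).prod
      isCompact_Icc
  have hgraph : IsCompact ((B ×ˢ Icc 2 ((c : ℝ) + 1)) ∩
      (fun p : (ℕ → ℕ) × ℝ => digitSeries p.1 p.2) ⁻¹' {1}) := by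
    refine hbox.of_isClosed_subset ?_ inter_subset_left
    refine ContinuousOn.preimage_isClosed_of_isClosed ((continuousOn_digitSeries (c := c)).mono ?_)
      hbox.isClosed isClosed_singleton
    exact prod_mono (fun d hd => pi_mono (fun _ _ => Icc_subset_Iic_self) (hBc hd))
      Icc_subset_Ici_self
  suffices growthRates B = Prod.snd '' ((B ×ˢ Icc 2 ((c : ℝ) + 1)) ∩
      (fun p : (ℕ → ℕ) × ℝ => digitSeries p.1 p.2) ⁻¹' {1}) by
    rw [this]
    exact (hgraph.image continuous_snd).isClosed
  ext x
  constructor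
  · rintro ⟨d, hd, hx, hdx⟩
    have hd1c n := hBc hd n (mem_univ n)
    exact ⟨(d, x), ⟨⟨hd, mem_Icc_of_digitSeries_eq_one (fun n => (hd1c n).1)
      (fun n => (hd1c n).2) hx hdx⟩, hdx⟩, rfl⟩
  · rintro ⟨⟨d, x⟩, ⟨⟨hd, hx, -⟩, hdx⟩, rfl⟩
    exact ⟨d, hd, by linarith, hdx⟩

lemma preperfect_growthRates {c : ℕ} {a b : ℕ → ℕ} (ha : ∀ n, 1 ≤ a n) (hb : ∀ n, b n ≤ c)
    (hab : ∀ N, ∃ n ≥ N, a n ≠ b n) :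
    Preperfect (growthRates (univ.pi fun n => Icc (a n) (b n))) := by
  have hbounds {d : ℕ → ℕ} (hd : d ∈ univ.pi fun n => Icc (a n) (b n)) (n : ℕ) :
      1 ≤ d n ∧ d n ≤ c :=
    ⟨(ha n).trans (hd n (mem_univ n)).1, (hd n (mem_univ n)).2.trans (hb n)⟩
  rintro x ⟨d, hd, hx, hdx⟩
  refine accPt_iff_nhds.2 fun U hU => ?_
  obtain ⟨ε, hε, hεU⟩ := Metric.mem_nhds_iff.1 hU
  obtain ⟨N, hN⟩ : ∃ N : ℕ, ((c : ℝ) + 1) ^ 2 * (c * 2⁻¹ ^ N) < ε := by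
    have h := ((tendsto_pow_atTop_nhds_zero_of_lt_one (by norm_num)
      (by norm_num : (2 : ℝ)⁻¹ < 1)).const_mul (c : ℝ)).const_mul (((c : ℝ) + 1) ^ 2)
    rw [mul_zero, mul_zero] at h
    exact (h.eventually (gt_mem_nhds hε)).exists
  obtain ⟨k, hkN, hk⟩ := hab N
  have hk : a k < b k := lt_of_le_of_ne ((hd k (mem_univ k)).1.trans (hd k (mem_univ k)).2) hk
  obtain ⟨v, hv, hvd⟩ := (show (Icc (a k) (b k)).Nontrivial from
    ⟨_, left_mem_Icc.2 hk.le, _, right_mem_Icc.2 hk.le, hk.ne⟩).exists_ne (d k)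
  have hd' : update d k v ∈ univ.pi fun n => Icc (a n) (b n) := by
    refine fun n _ => ?_
    rcases eq_or_ne n k with rfl | hn
    · simpa using hv
    · simpa [hn] using hd n (mem_univ n)
  obtain ⟨y, hy, hd'y⟩ := exists_digitSeries_eq_one (fun n => (hbounds hd' n).1)
    (fun n => (hbounds hd' n).2)
  have hy1 : 1 < y := by linarith [hy.1]
  refine ⟨y, ⟨hεU ?_, update d k v, hd', hy1, hd'y⟩, ?_⟩
  · rw [Metric.mem_ball, Real.dist_eq]
    refine lt_of_le_of_lt ?_ hN
    exact abs_sub_le_of_digitSeries_eq_one (fun n => (hbounds hd' n).1) (fun n => (hbounds hd' n).2)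
      (fun n => (hbounds hd n).1) (fun n => (hbounds hd n).2)
      (fun n hn => update_of_ne (by omega) _ _) hy1 hx hd'y hdx
  · rintro rfl
    exact digitSeries_update_ne (fun n => (hbounds hd n).2) hx hvd (hd'y.trans hdx.symm)

theorem stmt_10_general (c : ℕ) (r t : ℕ → ℕ)
    (hr : ∀ n, 1 ≤ n → 1 ≤ r n ∧ r n ≤ c)
    (ht : ∀ n, 1 ≤ n → 1 ≤ t n ∧ t n ≤ c)
    (hinf : ∀ N : ℕ, ∃ n, N ≤ n ∧ 1 ≤ n ∧ r n ≠ t n) :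
    Perfect {x : ℝ | ∃ s : ℕ → ℕ,
      (∀ n, 1 ≤ n → r n ≤ s n ∧ s n ≤ t n) ∧
      1 < x ∧ ∑' n : ℕ, (s (n + 1) : ℝ) * x⁻¹ ^ (n + 1) = 1} := by
  have hS : {x : ℝ | ∃ s : ℕ → ℕ, (∀ n, 1 ≤ n → r n ≤ s n ∧ s n ≤ t n) ∧
      1 < x ∧ ∑' n : ℕ, (s (n + 1) : ℝ) * x⁻¹ ^ (n + 1) = 1} =
      growthRates (univ.pi fun n => Icc (r (n + 1)) (t (n + 1))) := by
    ext x
    constructor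
    · rintro ⟨s, hs, hx⟩
      exact ⟨fun n => s (n + 1), fun n _ => hs (n + 1) n.succ_pos, hx⟩
    · rintro ⟨d, hd, hx⟩
      refine ⟨fun n => d (n - 1), fun n hn => ?_, hx⟩
      obtain ⟨m, rfl⟩ := Nat.exists_eq_add_of_le' hn
      exact hd m (mem_univ m)
  have ha n : 1 ≤ r (n + 1) := (hr (n + 1) n.succ_pos).1
  have hb n : t (n + 1) ≤ c := (ht (n + 1) n.succ_pos).2
  rw [hS]
  refine ⟨isClosed_growthRates (isClosed_set_pi fun _ _ => isClosed_discrete _)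
    (pi_mono fun n _ => Icc_subset_Icc (ha n) (hb n)), preperfect_growthRates ha hb fun N => ?_⟩
  obtain ⟨n, hNn, hn, hrt⟩ := hinf (N + 1)
  obtain ⟨m, rfl⟩ := Nat.exists_eq_add_of_le' hn
  exact ⟨m, by omega, hrt⟩

theorem stmt_10 (c : ℕ) (r t : ℕ → ℕ)
    (hr : ∀ n, 1 ≤ n → 1 ≤ r n ∧ r n ≤ c)
    (ht : ∀ n, 1 ≤ n → 1 ≤ t n ∧ t n ≤ c)
    (hrt : ∀ n, 1 ≤ n → r n ≤ t n)
    (hinf : ∀ N : ℕ, ∃ n, N ≤ n ∧ 1 ≤ n ∧ r n ≠ t n) :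
    Perfect {x : ℝ | ∃ s : ℕ → ℕ,
      (∀ n, 1 ≤ n → r n ≤ s n ∧ s n ≤ t n) ∧
      1 < x ∧ ∑' n : ℕ, (s (n + 1) : ℝ) * x⁻¹ ^ (n + 1) = 1} :=
  stmt_10_general c r t hr ht hinf
end

section
/- If C and D are sets of finite sequences (classes of permutations) whose counting sequences |C_n| and |D_n| satisfy |J_n| ≤ Σ_{k=0}^n (n choose k)|C_k||D_{n-k}| ≤ (n+1)|J_n| for a class J, and both lim |C_n|^{1/n} = g and lim |D_n|^{1/n} = h exist and are positive, then lim |J_n|^{1/n} exists and equals g + h. -/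
/-!
Write `S n = ∑ₖ (n choose k) Cₖ D₍ₙ₋ₖ₎`. Since `J n ≤ S n ≤ (n + 1) J n` and a polynomial factor
does not change an exponential growth rate, it suffices to show that `S` has growth rate `g + h`.
For `a > g`, `b > h` we have `Cₖ ≤ M aᵏ` and `Dₖ ≤ M' bᵏ` for all `k`, so the binomial theorem gives
`S n ≤ M M' (a + b)ⁿ`. For `0 < a < g`, `0 < b < h` we have `aᵏ ≤ Cₖ` and `bᵏ ≤ Dₖ` for `k ≥ N`;
keeping only the terms with `N ≤ k ≤ n + N` of `S (n + 2N)` and using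
`(n choose j) ≤ (n + 2N choose j + N)` gives `(ab)ᴺ (a + b)ⁿ ≤ S (n + 2N)`.
-/

open Filter Topology

section Root

variable {u v : ℕ → ℝ} {L c : ℝ}

lemma rpow_one_div_le_iff {x y : ℝ} {n : ℕ} (hx : 0 ≤ x) (hy : 0 ≤ y) (hn : n ≠ 0) :
    x ^ ((1 : ℝ) / n) ≤ y ↔ x ≤ y ^ n := by
  rw [one_div, Real.rpow_inv_le_iff_of_pos hx hy (by positivity), Real.rpow_natCast]

lemma le_rpow_one_div_iff {x y : ℝ} {n : ℕ} (hx : 0 ≤ x) (hy : 0 ≤ y) (hn : n ≠ 0) :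
    x ≤ y ^ ((1 : ℝ) / n) ↔ x ^ n ≤ y := by
  rw [one_div, Real.le_rpow_inv_iff_of_pos hx hy (by positivity), Real.rpow_natCast]

lemma eventually_le_pow_of_tendsto_root (hu0 : ∀ n, 0 ≤ u n)
    (hu : Tendsto (fun n : ℕ => u n ^ ((1 : ℝ) / n)) atTop (𝓝 L)) (hc : L < c) :
    ∀ᶠ n in atTop, u n ≤ c ^ n := by
  filter_upwards [hu.eventually_lt_const hc, eventually_ne_atTop 0] with n hlt hn
  have hc0 : 0 ≤ c := (Real.rpow_nonneg (hu0 n) _).trans hlt.le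
  exact (rpow_one_div_le_iff (hu0 n) hc0 hn).1 hlt.le

lemma eventually_pow_le_of_tendsto_root (hu0 : ∀ n, 0 ≤ u n)
    (hu : Tendsto (fun n : ℕ => u n ^ ((1 : ℝ) / n)) atTop (𝓝 L)) (hc0 : 0 ≤ c) (hc : c < L) :
    ∀ᶠ n in atTop, c ^ n ≤ u n := by
  filter_upwards [hu.eventually_const_lt hc, eventually_ne_atTop 0] with n hlt hn
  exact (le_rpow_one_div_iff hc0 (hu0 n) hn).1 hlt.le

lemma tendsto_root_of_eventually_pow_bounds (hu0 : ∀ n, 0 ≤ u n) (hL : 0 ≤ L)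
    (lower : ∀ c, 0 < c → c < L → ∀ᶠ n in atTop, c ^ n ≤ u n)
    (upper : ∀ c, L < c → ∀ᶠ n in atTop, u n ≤ c ^ n) :
    Tendsto (fun n : ℕ => u n ^ ((1 : ℝ) / n)) atTop (𝓝 L) := by
  refine tendsto_order.2 ⟨fun c hc => ?_, fun c hc => ?_⟩
  · rcases lt_or_ge c 0 with hc0 | hc0
    · exact Eventually.of_forall fun n => hc0.trans_le (Real.rpow_nonneg (hu0 n) _)
    obtain ⟨c', hcc', hc'L⟩ := exists_between hc
    filter_upwards [lower c' (hc0.trans_lt hcc') hc'L, eventually_ne_atTop 0] with n hn hn0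
    exact hcc'.trans_le ((le_rpow_one_div_iff (hc0.trans hcc'.le) (hu0 n) hn0).2 hn)
  · obtain ⟨c', hLc', hc'c⟩ := exists_between hc
    filter_upwards [upper c' hLc', eventually_ne_atTop 0] with n hn hn0
    exact ((rpow_one_div_le_iff (hu0 n) (hL.trans hLc'.le) hn0).2 hn).trans_lt hc'c

lemma eventually_mul_pow_le_pow (M : ℝ) {x y : ℝ} (hx : 0 ≤ x) (hxy : x < y) :
    ∀ᶠ n : ℕ in atTop, M * (n + 1) * x ^ n ≤ y ^ n := by
  have hy : 0 < y := hx.trans_lt hxy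
  have hr0 : 0 ≤ x / y := div_nonneg hx hy.le
  have hr1 : x / y < 1 := (div_lt_one hy).2 hxy
  have hlim : Tendsto (fun n : ℕ => M * (n * (x / y) ^ n + (x / y) ^ n)) atTop (𝓝 0) := by
    simpa using ((tendsto_self_mul_const_pow_of_lt_one hr0 hr1).add
      (tendsto_pow_atTop_nhds_zero_of_lt_one hr0 hr1)).const_mul M
  filter_upwards [hlim.eventually_lt_const one_pos] with n hn
  have hsplit : M * (n + 1) * x ^ n = M * (n * (x / y) ^ n + (x / y) ^ n) * y ^ n := by
    rw [div_pow]
    field_simp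
  rw [hsplit]
  exact mul_le_of_le_one_left (by positivity) hn.le

lemma exists_forall_le_mul_pow {a : ℝ} (ha : 0 < a) (hu : ∀ᶠ k in atTop, u k ≤ a ^ k) :
    ∃ M, ∀ k, u k ≤ M * a ^ k := by
  have hb : IsBoundedUnder (· ≤ ·) atTop (fun k => u k / a ^ k) :=
    isBoundedUnder_of_eventually_le (hu.mono fun k hk => (div_le_one (by positivity)).2 hk)
  obtain ⟨M, hM⟩ := hb.bddAbove_range
  exact ⟨M, fun k => (div_le_iff₀ (by positivity)).1 (hM ⟨k, rfl⟩)⟩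

lemma tendsto_root_of_le_of_le_mul (hu0 : ∀ n, 0 ≤ u n) (huv : ∀ n, u n ≤ v n)
    (hvu : ∀ n, v n ≤ (n + 1) * u n)
    (hv : Tendsto (fun n : ℕ => v n ^ ((1 : ℝ) / n)) atTop (𝓝 L)) :
    Tendsto (fun n : ℕ => u n ^ ((1 : ℝ) / n)) atTop (𝓝 L) := by
  have hv0 : ∀ n, 0 ≤ v n := fun n => (hu0 n).trans (huv n)
  have hL : 0 ≤ L := ge_of_tendsto' hv fun n => Real.rpow_nonneg (hv0 n) _
  refine tendsto_root_of_eventually_pow_bounds hu0 hL (fun c hc0 hc => ?_) (fun c hc => ?_)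
  · obtain ⟨c', hcc', hc'L⟩ := exists_between hc
    filter_upwards [eventually_pow_le_of_tendsto_root hv0 hv (hc0.trans hcc').le hc'L,
      eventually_mul_pow_le_pow 1 hc0.le hcc'] with n hc'v hcc'n
    have : (n + 1 : ℝ) * c ^ n ≤ (n + 1) * u n := by linarith [hvu n]
    exact le_of_mul_le_mul_left this (by positivity)
  · filter_upwards [eventually_le_pow_of_tendsto_root hv0 hv hc] with n hn
    exact (huv n).trans hn

end Root

section BinomConv

def binomConv (C D : ℕ → ℝ) (n : ℕ) : ℝ :=
  ∑ k ∈ Finset.range (n + 1), (n.choose k : ℝ) * C k * D (n - k)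

lemma Nat.choose_le_choose_add_add (n k m : ℕ) : n.choose k ≤ (n + m).choose (k + m) := by
  induction m with
  | zero => rfl
  | succ m ih =>
    rw [← add_assoc, ← add_assoc, Nat.choose_succ_succ]
    exact ih.trans (Nat.le_add_right _ _)

variable {C D : ℕ → ℝ} {g h c : ℝ}

lemma binomConv_nonneg (hC0 : ∀ k, 0 ≤ C k) (hD0 : ∀ k, 0 ≤ D k) (n : ℕ) :
    0 ≤ binomConv C D n :=
  Finset.sum_nonneg fun k _ => mul_nonneg (mul_nonneg (by positivity) (hC0 k)) (hD0 _)

lemma binomConv_le {M₁ M₂ a b : ℝ} (hC0 : ∀ k, 0 ≤ C k) (hD0 : ∀ k, 0 ≤ D k)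
    (hC : ∀ k, C k ≤ M₁ * a ^ k) (hD : ∀ k, D k ≤ M₂ * b ^ k) (n : ℕ) :
    binomConv C D n ≤ M₁ * M₂ * (a + b) ^ n := by
  rw [add_pow, Finset.mul_sum]
  refine Finset.sum_le_sum fun k _ => ?_
  calc (n.choose k : ℝ) * C k * D (n - k)
      ≤ n.choose k * (M₁ * a ^ k) * (M₂ * b ^ (n - k)) :=
        mul_le_mul (mul_le_mul_of_nonneg_left (hC k) (by positivity)) (hD _) (hD0 _)
          (mul_nonneg (by positivity) ((hC0 k).trans (hC k)))
    _ = M₁ * M₂ * (a ^ k * b ^ (n - k) * n.choose k) := by ring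

lemma pow_mul_pow_le_binomConv {a b : ℝ} {N : ℕ} (hC0 : ∀ k, 0 ≤ C k) (hD0 : ∀ k, 0 ≤ D k)
    (ha : 0 ≤ a) (hb : 0 ≤ b) (hC : ∀ k ≥ N, a ^ k ≤ C k) (hD : ∀ k ≥ N, b ^ k ≤ D k)
    (n : ℕ) : (a * b) ^ N * (a + b) ^ n ≤ binomConv C D (n + 2 * N) := by
  set f : ℕ → ℝ := fun k => ((n + 2 * N).choose k : ℝ) * C k * D (n + 2 * N - k)
  have hf0 : ∀ k, 0 ≤ f k := fun k => mul_nonneg (mul_nonneg (by positivity) (hC0 k)) (hD0 _)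
  calc (a * b) ^ N * (a + b) ^ n
      = ∑ j ∈ Finset.range (n + 1), (n.choose j : ℝ) * a ^ (j + N) * b ^ (n - j + N) := by
        rw [add_pow, Finset.mul_sum]
        exact Finset.sum_congr rfl fun j _ => by ring
    _ ≤ ∑ j ∈ Finset.range (n + 1), f (j + N) := by
        refine Finset.sum_le_sum fun j hj => ?_
        have hjn : n - j + N = n + 2 * N - (j + N) := by
          have := Finset.mem_range.1 hj
          omega
        have hchoose : n.choose j ≤ (n + 2 * N).choose (j + N) :=
          (Nat.choose_le_choose_add_add n j N).trans (by
            rw [two_mul, ← add_assoc]; exact Nat.choose_le_add _ _ _)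
        simp only [f, ← hjn]
        gcongr
        · exact mul_nonneg (Nat.cast_nonneg _) (hC0 _)
        · exact hC _ (Nat.le_add_left _ _)
        · exact hD _ (Nat.le_add_left _ _)
    _ = ∑ k ∈ Finset.Ico N (n + 1 + N), f k := by
        rw [Finset.range_eq_Ico, Finset.sum_Ico_add', zero_add]
    _ ≤ binomConv C D (n + 2 * N) :=
        Finset.sum_le_sum_of_subset_of_nonneg
          (fun k hk => by simp only [Finset.mem_Ico, Finset.mem_range] at hk ⊢; omega)
          fun k _ _ => hf0 k

lemma eventually_binomConv_le_pow (hC0 : ∀ k, 0 ≤ C k) (hD0 : ∀ k, 0 ≤ D k)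
    (hC : Tendsto (fun n : ℕ => C n ^ ((1 : ℝ) / n)) atTop (𝓝 g))
    (hD : Tendsto (fun n : ℕ => D n ^ ((1 : ℝ) / n)) atTop (𝓝 h))
    (hg : 0 < g) (hh : 0 < h) (hc : g + h < c) :
    ∀ᶠ n in atTop, binomConv C D n ≤ c ^ n := by
  obtain ⟨t, ht1, htc⟩ := exists_between ((one_lt_div (add_pos hg hh)).2 hc)
  obtain ⟨M₁, hM₁⟩ := exists_forall_le_mul_pow (by positivity)
    (eventually_le_pow_of_tendsto_root hC0 hC (lt_mul_of_one_lt_left hg ht1))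
  obtain ⟨M₂, hM₂⟩ := exists_forall_le_mul_pow (by positivity)
    (eventually_le_pow_of_tendsto_root hD0 hD (lt_mul_of_one_lt_left hh ht1))
  have hab : t * g + t * h < c := by
    rw [← mul_add]; exact (lt_div_iff₀ (add_pos hg hh)).1 htc
  filter_upwards [eventually_mul_pow_le_pow (M₁ * M₂) (by positivity) hab] with n hn
  have hS := binomConv_le hC0 hD0 hM₁ hM₂ n
  have hS0 := binomConv_nonneg hC0 hD0 n
  calc binomConv C D n ≤ M₁ * M₂ * (t * g + t * h) ^ n := hS
    _ ≤ (n + 1) * (M₁ * M₂ * (t * g + t * h) ^ n) :=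
        le_mul_of_one_le_left (hS0.trans hS) (le_add_of_nonneg_left n.cast_nonneg)
    _ = M₁ * M₂ * (n + 1) * (t * g + t * h) ^ n := by ring
    _ ≤ c ^ n := hn

lemma eventually_pow_le_binomConv (hC0 : ∀ k, 0 ≤ C k) (hD0 : ∀ k, 0 ≤ D k)
    (hC : Tendsto (fun n : ℕ => C n ^ ((1 : ℝ) / n)) atTop (𝓝 g))
    (hD : Tendsto (fun n : ℕ => D n ^ ((1 : ℝ) / n)) atTop (𝓝 h))
    (hg : 0 < g) (hh : 0 < h) (hc0 : 0 < c) (hc : c < g + h) :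
    ∀ᶠ n in atTop, c ^ n ≤ binomConv C D n := by
  obtain ⟨t, hct, ht1⟩ := exists_between ((div_lt_one (add_pos hg hh)).2 hc)
  have ht0 : 0 < t := (div_pos hc0 (add_pos hg hh)).trans hct
  have ha : 0 < t * g := mul_pos ht0 hg
  have hb : 0 < t * h := mul_pos ht0 hh
  obtain ⟨N, hN⟩ := ((eventually_pow_le_of_tendsto_root hC0 hC ha.le
    (mul_lt_of_lt_one_left hg ht1)).and (eventually_pow_le_of_tendsto_root hD0 hD hb.le
    (mul_lt_of_lt_one_left hh ht1))).exists_forall_of_atTop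
  have hab : c < t * g + t * h := by
    rw [← mul_add]; exact (div_lt_iff₀ (add_pos hg hh)).1 hct
  set K := (t * g * (t * h)) ^ N / (t * g + t * h) ^ (2 * N) with hK_def
  have hK : 0 < K := by positivity
  filter_upwards [eventually_mul_pow_le_pow K⁻¹ hc0.le hab, eventually_ge_atTop (2 * N)]
    with m hm hmN
  obtain ⟨n, rfl⟩ := Nat.exists_eq_add_of_le' hmN
  have hcK : c ^ (n + 2 * N) ≤ K * (t * g + t * h) ^ (n + 2 * N) := by
    rw [← inv_mul_le_iff₀ hK]
    refine le_trans ?_ hm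
    rw [mul_assoc]
    gcongr
    exact le_mul_of_one_le_left (by positivity) (le_add_of_nonneg_left (Nat.cast_nonneg _))
  calc c ^ (n + 2 * N) ≤ K * (t * g + t * h) ^ (n + 2 * N) := hcK
    _ = (t * g * (t * h)) ^ N * (t * g + t * h) ^ n := by
        rw [hK_def, pow_add]
        field_simp
    _ ≤ binomConv C D (n + 2 * N) :=
        pow_mul_pow_le_binomConv hC0 hD0 ha.le hb.le
          (fun k hk => (hN k hk).1) (fun k hk => (hN k hk).2) n

theorem tendsto_root_binomConv (hC0 : ∀ k, 0 ≤ C k) (hD0 : ∀ k, 0 ≤ D k)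
    (hC : Tendsto (fun n : ℕ => C n ^ ((1 : ℝ) / n)) atTop (𝓝 g))
    (hD : Tendsto (fun n : ℕ => D n ^ ((1 : ℝ) / n)) atTop (𝓝 h))
    (hg : 0 < g) (hh : 0 < h) :
    Tendsto (fun n : ℕ => binomConv C D n ^ ((1 : ℝ) / n)) atTop (𝓝 (g + h)) :=
  tendsto_root_of_eventually_pow_bounds (binomConv_nonneg hC0 hD0) (add_pos hg hh).le
    (fun _ hc0 hc => eventually_pow_le_binomConv hC0 hD0 hC hD hg hh hc0 hc)
    (fun _ hc => eventually_binomConv_le_pow hC0 hD0 hC hD hg hh hc)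

end BinomConv

theorem stmt_12 (C D J : ℕ → ℕ) (g h : ℝ) (hg : 0 < g) (hh : 0 < h)
    (hbound : ∀ n : ℕ,
      (J n : ℝ) ≤ ∑ k ∈ Finset.range (n + 1), (n.choose k : ℝ) * C k * D (n - k) ∧
      ∑ k ∈ Finset.range (n + 1), (n.choose k : ℝ) * C k * D (n - k) ≤ (n + 1 : ℝ) * J n)
    (hC : Tendsto (fun n : ℕ => (C n : ℝ) ^ ((1 : ℝ) / n)) atTop (𝓝 g))
    (hD : Tendsto (fun n : ℕ => (D n : ℝ) ^ ((1 : ℝ) / n)) atTop (𝓝 h)) :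
    Tendsto (fun n : ℕ => (J n : ℝ) ^ ((1 : ℝ) / n)) atTop (𝓝 (g + h)) :=
  tendsto_root_of_le_of_le_mul (v := binomConv (fun k => C k) (fun k => D k))
    (fun _ => Nat.cast_nonneg _) (fun n => (hbound n).1) (fun n => (hbound n).2)
    (tendsto_root_binomConv (fun _ => Nat.cast_nonneg _) (fun _ => Nat.cast_nonneg _) hC hD hg hh)
end

section
/- Let λ be the unique real root of x^5 − 2x^4 − 2x^2 − 2x − 1 and let (r_n) = (1, 1, 3, 5, 6, 6, 6, …) (constant 6 from n = 5 on). Then λ is the unique positive solution of Σ_{n≥1} r_n λ^{-n} = 1. -/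
/-!
For `x > 1` the series is `1/x + 1/x² + 3/x³ + 5/x⁴ + 6/(x⁴ (x - 1))`, and multiplying the
equation by `x⁴ (x - 1)` turns it into the quintic. For `0 < x ≤ 1` the terms are at least `1`,
so the series diverges and its `tsum` is `0`. Every real root of the quintic exceeds `2`.
-/

/-- The sequence (1, 1, 3, 5, 6, 6, 6, …) counting sum indecomposable
permutations properly contained in the antichain `A = U^{12,12} ∪ U^{21,12}`. -/
def r17 : ℕ → ℕ := fun n =>
  if n ≤ 2 then 1 else if n = 3 then 3 else if n = 4 then 5 else 6

lemma one_le_r17 (n : ℕ) : 1 ≤ r17 n := by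
  unfold r17; split_ifs <;> omega

lemma r17_le_six (n : ℕ) : r17 n ≤ 6 := by
  unfold r17; split_ifs <;> omega

lemma r17_add_five (n : ℕ) : r17 (n + 5) = 6 := by
  unfold r17; split_ifs <;> omega

section Series

variable {q : ℝ}

lemma summable_r17_mul_pow (hq₀ : 0 ≤ q) (hq₁ : q < 1) :
    Summable fun n : ℕ => (r17 (n + 1) : ℝ) * q ^ (n + 1) := by
  have hgeo : Summable fun n : ℕ => 6 * q ^ (n + 1) :=
    (summable_geometric_of_lt_one hq₀ hq₁).mul_left (6 * q) |>.congr fun n => by ring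
  refine hgeo.of_nonneg_of_le (fun n => by positivity) fun n => ?_
  gcongr
  exact_mod_cast r17_le_six (n + 1)

lemma tsum_r17_mul_pow (hq₀ : 0 ≤ q) (hq₁ : q < 1) :
    ∑' n : ℕ, (r17 (n + 1) : ℝ) * q ^ (n + 1)
      = q + q ^ 2 + 3 * q ^ 3 + 5 * q ^ 4 + 6 * q ^ 5 / (1 - q) := by
  have htail : ∑' n : ℕ, (r17 (n + 4 + 1) : ℝ) * q ^ (n + 4 + 1) = 6 * q ^ 5 / (1 - q) := by
    have hterm (n : ℕ) : (r17 (n + 4 + 1) : ℝ) * q ^ (n + 4 + 1) = 6 * q ^ 5 * q ^ n := by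
      rw [r17_add_five]; push_cast; ring
    rw [tsum_congr hterm, tsum_mul_left, tsum_geometric_of_lt_one hq₀ hq₁, div_eq_mul_inv]
  rw [← (summable_r17_mul_pow hq₀ hq₁).sum_add_tsum_nat_add 4, htail]
  norm_num [Finset.sum_range_succ, r17]

lemma not_summable_r17_mul_pow (hq : 1 ≤ q) :
    ¬ Summable fun n : ℕ => (r17 (n + 1) : ℝ) * q ^ (n + 1) := by
  intro hsum
  have hterm (n : ℕ) : (1 : ℝ) ≤ (r17 (n + 1) : ℝ) * q ^ (n + 1) :=
    one_le_mul_of_one_le_of_one_le (by exact_mod_cast one_le_r17 _) (one_le_pow₀ hq)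
  have := ge_of_tendsto' hsum.tendsto_atTop_zero hterm
  norm_num at this

end Series

lemma two_lt_of_root {x : ℝ} (hx : x ^ 5 - 2 * x ^ 4 - 2 * x ^ 2 - 2 * x - 1 = 0) : 2 < x := by
  by_contra! h
  -- the quintic is `x⁴ (x - 2) - (2x² + 2x + 1)`, negative for `x ≤ 2`
  have : x ^ 4 * (x - 2) ≤ 0 := mul_nonpos_of_nonneg_of_nonpos (by positivity) (by linarith)
  nlinarith [sq_nonneg (2 * x + 1)]

lemma tsum_r17_mul_inv_pow_eq_one_iff {x : ℝ} (hx : 1 < x) :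
    ∑' n : ℕ, (r17 (n + 1) : ℝ) * x⁻¹ ^ (n + 1) = 1 ↔
      x ^ 5 - 2 * x ^ 4 - 2 * x ^ 2 - 2 * x - 1 = 0 := by
  have hx₀ : x ≠ 0 := by positivity
  have hx₁ : x - 1 ≠ 0 := sub_ne_zero.2 hx.ne'
  rw [tsum_r17_mul_pow (by positivity) (inv_lt_one_of_one_lt₀ hx)]
  have key : (x⁻¹ + x⁻¹ ^ 2 + 3 * x⁻¹ ^ 3 + 5 * x⁻¹ ^ 4 + 6 * x⁻¹ ^ 5 / (1 - x⁻¹) - 1)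
      * (x ^ 4 * (x - 1)) = -(x ^ 5 - 2 * x ^ 4 - 2 * x ^ 2 - 2 * x - 1) := by
    field_simp
    ring
  constructor
  · intro h
    rw [h, sub_self, zero_mul] at key
    linarith
  · intro h
    rw [h, neg_zero] at key
    have := (mul_eq_zero.1 key).resolve_right (by positivity)
    linarith

theorem stmt_17 (lam : ℝ)
    (hroot : lam^5 - 2*lam^4 - 2*lam^2 - 2*lam - 1 = 0)
    (huniq : ∀ x : ℝ, x^5 - 2*x^4 - 2*x^2 - 2*x - 1 = 0 → x = lam) :
    (0 < lam ∧ ∑' n : ℕ, (r17 (n + 1) : ℝ) * lam⁻¹ ^ (n + 1) = 1) ∧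
    ∀ x : ℝ, 0 < x → (∑' n : ℕ, (r17 (n + 1) : ℝ) * x⁻¹ ^ (n + 1) = 1) → x = lam := by
  have hlam : 1 < lam := by linarith [two_lt_of_root hroot]
  refine ⟨⟨by linarith, (tsum_r17_mul_inv_pow_eq_one_iff hlam).2 hroot⟩, fun x hx hsum => ?_⟩
  rcases lt_or_ge 1 x with hx₁ | hx₁
  · exact huniq x ((tsum_r17_mul_inv_pow_eq_one_iff hx₁).1 hsum)
  · have hdiv := not_summable_r17_mul_pow ((one_le_inv₀ hx).2 hx₁)
    rw [tsum_eq_zero_of_not_summable hdiv] at hsum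
    exact absurd hsum zero_ne_one
end
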